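/- arXiv:1903.02112 — 8 statements merged into one kernel-verified Lean document; each statement's English description precedes it below -/
import Mathlib

section
/- Let q be an odd prime power and A ∈ F_q with A³ + 1 ≠ 0. Then the function f(x) = x(x^{q²} + A x^q) is planar on F_{q³}. -/
/-!
Write `σ` for the `q`-Frobenius of `F_{q³}`, so `f x = x (σ² x + A σ x)`. Then
`f (x + C) - f x = L_C x + f C` with `L_C x = C σ² x + A C σ x + (σ² C + A σ C) x` additive,
so planarity amounts to `L_C` having trivial kernel. Applying `σ` and `σ²` to `L_C x = 0`
gives three linear equations in `x, σ x, σ² x`; eliminating `σ x` and `σ² x` yields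
`-2 C σC σ²C (1 + A³) x = 0`, which forces `x = 0` in odd characteristic when `A³ ≠ -1`.
-/

section TwistedQuadratic

variable {E : Type*} [Field E] (σ : E →+* E) (A : E)

def twistedQuadratic (x : E) : E := x * (σ (σ x) + A * σ x)

def twistedPolarization (C : E) : E →+ E :=
  AddMonoidHom.mk' (fun x => C * σ (σ x) + A * C * σ x + (σ (σ C) + A * σ C) * x) fun x y => by
    simp only [map_add]
    ring

theorem twistedQuadratic_add_sub (C x : E) :
    twistedQuadratic σ A (x + C) - twistedQuadratic σ A x
      = twistedPolarization σ A C x + twistedQuadratic σ A C := by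
  simp only [twistedQuadratic, twistedPolarization, AddMonoidHom.mk'_apply, map_add]
  ring

variable {σ A}

theorem twistedPolarization_eq_zero (hσ : ∀ z, σ (σ (σ z)) = z) (hA : σ A = A)
    (h2 : (2 : E) ≠ 0) (hA3 : A ^ 3 + 1 ≠ 0) {C x : E} (hC : C ≠ 0)
    (h : twistedPolarization σ A C x = 0) : x = 0 := by
  simp only [twistedPolarization, AddMonoidHom.mk'_apply] at h
  have h' := congrArg σ h
  simp only [map_add, map_mul, map_zero, hA, hσ] at h'
  have h'' := congrArg σ h'
  simp only [map_add, map_mul, map_zero, hA, hσ] at h''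
  -- the adjugate of the 3×3 system in `x, σ x, σ² x` eliminates `σ x` and `σ² x`
  have hx : (-2 * (C * σ C * σ (σ C)) * (1 + A ^ 3)) * x = 0 := by
    linear_combination
      (A * σ C * σ (σ C) - (C + A * σ (σ C)) * (σ C + A * C)) * h
      + (-(C * σ (σ C)) + A * C * σ C + A ^ 2 * C ^ 2) * h'
      + (C ^ 2 + A * C * σ (σ C) - A ^ 2 * C * σ C) * h''
  have hA3' : 1 + A ^ 3 ≠ 0 := by rwa [add_comm]
  have hσC : σ C ≠ 0 := (map_ne_zero σ).mpr hC
  have hσσC : σ (σ C) ≠ 0 := (map_ne_zero σ).mpr hσC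
  exact (mul_eq_zero.mp hx).resolve_left <| by
    have hneg2 : (-2 : E) ≠ 0 := neg_ne_zero.mpr h2
    positivity

theorem twistedQuadratic_add_sub_injective (hσ : ∀ z, σ (σ (σ z)) = z) (hA : σ A = A)
    (h2 : (2 : E) ≠ 0) (hA3 : A ^ 3 + 1 ≠ 0) {C : E} (hC : C ≠ 0) :
    Function.Injective fun x => twistedQuadratic σ A (x + C) - twistedQuadratic σ A x := by
  have hL : Function.Injective (twistedPolarization σ A C) :=
    (injective_iff_map_eq_zero _).mpr fun _ => twistedPolarization_eq_zero hσ hA h2 hA3 hC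
  simp_rw [twistedQuadratic_add_sub]
  exact (add_left_injective _).comp hL

end TwistedQuadratic

theorem stmt_5_general (q : ℕ) (hq : Odd q)
    (F E : Type*) [Field F] [Fintype F] [Field E] [Fintype E] [Algebra F E]
    (hF : Fintype.card F = q) (hE : Fintype.card E = q ^ 3)
    (A : F) (hA : A ^ 3 + 1 ≠ 0) :
    ∀ C : E, C ≠ 0 → Function.Bijective (fun x : E =>
      (x + C) * ((x + C) ^ (q ^ 2) + algebraMap F E A * (x + C) ^ q)
        - x * (x ^ (q ^ 2) + algebraMap F E A * x ^ q)) := by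
  intro C hC
  set σ : E →+* E := (FiniteField.frobeniusAlgHom F E : E →+* E)
  have hσ_apply (x : E) : σ x = x ^ q := by rw [← hF]; rfl
  have hσ : ∀ z, σ (σ (σ z)) = z := fun z => by
    simp only [hσ_apply, ← pow_mul, ← pow_three', ← hE, FiniteField.pow_card]
  have hσA : σ (algebraMap F E A) = algebraMap F E A :=
    (FiniteField.frobeniusAlgHom F E).commutes A
  have h2 : (2 : E) ≠ 0 := by
    refine Ring.two_ne_zero fun hchar => ?_
    have hE2 := FiniteField.even_card_of_char_two hchar
    rw [hE] at hE2
    exact Nat.not_even_iff_odd.mpr hq.pow (Nat.even_iff.mpr hE2)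
  have hA3 : algebraMap F E A ^ 3 + 1 ≠ 0 := by
    rwa [← map_pow, ← map_one (algebraMap F E), ← map_add, map_ne_zero]
  rw [← Finite.injective_iff_bijective]
  convert twistedQuadratic_add_sub_injective hσ hσA h2 hA3 hC using 2 with x
  simp only [twistedQuadratic, hσ_apply, ← pow_mul, sq]

/-- If `A ∈ F_q` with `A³ + 1 ≠ 0` then `f(x) = x (x^{q²} + A x^q)` is planar on `F_{q³}`. -/
theorem stmt_5 (q : ℕ) (hp : IsPrimePow q) (hq : Odd q)
    (F E : Type*) [Field F] [Fintype F] [Field E] [Fintype E] [Algebra F E]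
    (hF : Fintype.card F = q) (hE : Fintype.card E = q ^ 3)
    (A : F) (hA : A ^ 3 + 1 ≠ 0) :
    ∀ C : E, C ≠ 0 → Function.Bijective (fun x : E =>
      (x + C) * ((x + C) ^ (q ^ 2) + algebraMap F E A * (x + C) ^ q)
        - x * (x ^ (q ^ 2) + algebraMap F E A * x ^ q)) :=
  stmt_5_general q hq F E hF hE A hA
end

section
/- Let q be an odd prime power and A ∈ F_q with A³ + 1 = 0. Then the function f(x) = x(x^{q²} + A x^q) is not planar on F_{q³}. -/
/-!
Write `f(x) = x L(x)` with `L(x) = x^{q²} + A x^q`, which is additive because `x ↦ x^q` is the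
Frobenius of `E` over `F`. Then `f(x + C) - f(x) = x L(C) + C L(x) + C L(C)`, so as soon as
`L(C) = 0` for some `C ≠ 0`, the derivative in direction `C` takes the value `0` at both `0` and `C`.
Such a `C` is a solution of `C^{q-1} = -A`: then `C^q = -A C` and `C^{q²} = -A C^q`. It exists
because `(-A)^{q²+q+1} = (-A)^3 = 1` and the `(q-1)`-th powers of the cyclic group `E^×` of order
`(q-1)(q²+q+1)` are exactly its elements of order dividing `q²+q+1`.
-/

theorem IsCyclic.exists_pow_eq_of_pow_eq_one {G : Type*} [Group G] [IsCyclic G] [Finite G]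
    {d e : ℕ} (hcard : Nat.card G = d * e) {x : G} (hx : x ^ e = 1) : ∃ y : G, y ^ d = x := by
  obtain ⟨g, hg⟩ := IsCyclic.exists_generator (α := G)
  obtain ⟨m, rfl⟩ := hg x
  have he : (e : ℤ) ≠ 0 := by
    have := Nat.card_pos (α := G)
    rw [hcard] at this
    exact_mod_cast (Nat.pos_of_mul_pos_left this).ne'
  have hdvd : ((d * e : ℕ) : ℤ) ∣ m * e := by
    rw [← hcard, ← orderOf_eq_card_of_forall_mem_zpowers hg, orderOf_dvd_iff_zpow_eq_one, zpow_mul]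
    exact_mod_cast hx
  obtain ⟨k, rfl⟩ : (d : ℤ) ∣ m := by
    push_cast at hdvd
    exact (mul_dvd_mul_iff_right he).mp hdvd
  exact ⟨g ^ k, by rw [← zpow_natCast, ← zpow_mul, mul_comm]⟩

theorem FiniteField.exists_pow_eq_of_pow_eq_one {K : Type*} [Field K] [Fintype K] {d e : ℕ}
    (hcard : Fintype.card K = d * e + 1) {b : K} (hb : b ^ e = 1) : ∃ y : K, y ≠ 0 ∧ y ^ d = b := by
  classical
  have hb0 : b ≠ 0 := by
    rintro rfl
    have he : e ≠ 0 := by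
      rintro rfl
      have := Fintype.one_lt_card (α := K)
      omega
    simp [zero_pow he] at hb
  have hcardu : Nat.card Kˣ = d * e := by
    rw [Nat.card_eq_fintype_card, Fintype.card_units, hcard, Nat.add_sub_cancel]
  obtain ⟨y, hy⟩ := IsCyclic.exists_pow_eq_of_pow_eq_one hcardu
    (x := Units.mk0 b hb0) (Units.ext (by simpa using hb))
  exact ⟨y, y.ne_zero, by simpa using congrArg Units.val hy⟩

theorem FiniteField.pow_card_sq_add_card_add_one {K : Type*} [Field K] [Fintype K] (b : K) :
    b ^ (Fintype.card K ^ 2 + Fintype.card K + 1) = b ^ 3 := by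
  rw [pow_add, pow_add, FiniteField.pow_card_pow, FiniteField.pow_card]
  ring

theorem not_injective_sub_of_map_eq_zero {R : Type*} [CommRing R] (L : R →+ R) {C : R}
    (hC : C ≠ 0) (hLC : L C = 0) :
    ¬ Function.Injective (fun x : R => (x + C) * L (x + C) - x * L x) := by
  intro h
  refine hC (h ?_)
  simp only [map_add, hLC, zero_add]
  ring

theorem stmt_6_general (q : ℕ)
    (F E : Type*) [Field F] [Fintype F] [Field E] [Fintype E] [Algebra F E]
    (hF : Fintype.card F = q) (hE : Fintype.card E = q ^ 3)
    (A : F) (hA : A ^ 3 + 1 = 0) :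
    ¬ ∀ C : E, C ≠ 0 → Function.Bijective (fun x : E =>
        (x + C) * ((x + C) ^ (q ^ 2) + algebraMap F E A * (x + C) ^ q)
          - x * (x ^ (q ^ 2) + algebraMap F E A * x ^ q)) := by
  intro h
  let φ := (FiniteField.frobeniusAlgHom F E).toLinearMap
  let L : E →+ E := (φ ∘ₗ φ + A • φ).toAddMonoidHom
  have hL (x : E) : L x = x ^ (q ^ 2) + algebraMap F E A * x ^ q := by
    simp [L, φ, Algebra.smul_def, ← pow_mul, sq, hF]
  have hq : 1 ≤ q := hF ▸ Fintype.card_pos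
  have hcardE : Fintype.card E = (q - 1) * (q ^ 2 + q + 1) + 1 := by
    rw [hE]
    zify [hq, Nat.one_le_pow 3 q hq]
    ring
  have hnegA : (algebraMap F E (-A)) ^ (q ^ 2 + q + 1) = 1 := by
    rw [← map_pow, ← hF, FiniteField.pow_card_sq_add_card_add_one, neg_pow,
      eq_neg_of_add_eq_zero_left hA]
    norm_num
  obtain ⟨C, hC0, hC⟩ := FiniteField.exists_pow_eq_of_pow_eq_one hcardE hnegA
  have hCq : C ^ q = algebraMap F E (-A) * C := by
    rw [← hC, ← pow_succ, Nat.sub_add_cancel hq]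
  have hAq : algebraMap F E (-A) ^ q = algebraMap F E (-A) := by
    rw [← map_pow, ← hF, FiniteField.pow_card]
  have hLC : L C = 0 := by
    rw [hL, sq, pow_mul, hCq, mul_pow, hAq, ← hCq, map_neg]
    ring
  refine not_injective_sub_of_map_eq_zero L hC0 hLC ?_
  simpa only [hL] using (h C hC0).injective

/-- If `A ∈ F_q` with `A³ + 1 = 0` then `f(x) = x (x^{q²} + A x^q)` is not planar on `F_{q³}`. -/
theorem stmt_6 (q : ℕ) (hp : IsPrimePow q) (hq : Odd q)
    (F E : Type*) [Field F] [Fintype F] [Field E] [Fintype E] [Algebra F E]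
    (hF : Fintype.card F = q) (hE : Fintype.card E = q ^ 3)
    (A : F) (hA : A ^ 3 + 1 = 0) :
    ¬ ∀ C : E, C ≠ 0 → Function.Bijective (fun x : E =>
        (x + C) * ((x + C) ^ (q ^ 2) + algebraMap F E A * (x + C) ^ q)
          - x * (x ^ (q ^ 2) + algebraMap F E A * x ^ q)) :=
  stmt_6_general q F E hF hE A hA
end

section
/- Let q be an odd prime power and A, B ∈ F_q with A³ - 2AB + 1 = 0 and A³ ≠ 1 and A³ ≠ -1. Then f_{A,B}(x) = x(x^{q²} + A x^q + B x) is planar on F_{q³}. -/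
/-!
Let `z = x₁ - x₂` with `f(x₁ + C) - f(x₁) = f(x₂ + C) - f(x₂)`, and write `zᵢ = z^{qⁱ}`,
`cᵢ = C^{qⁱ}`. Then `z₂c₀ + z₀c₂ + A(z₁c₀ + z₀c₁) + 2B z₀c₀ = 0`, and its two Frobenius
conjugates form a linear system for the cross terms `zᵢcⱼ + zⱼcᵢ` whose determinant is
`A³ + 1 = 2AB ≠ 0`; it expresses them through the products `Pᵢ = zᵢcᵢ`. The symmetric matrix
`z cᵀ + c zᵀ` has rank two, so its determinant vanishes; substituting the cross terms turns this
into `(A³ - 1)² P₀P₁P₂ = 0`, which is impossible for `z, C ≠ 0` as `A³ ≠ 1`.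
-/

/-- Half the determinant of the rank-two matrix `z cᵀ + c zᵀ`, whose diagonal entries are
`2 zᵢcᵢ` and whose off-diagonal entries are the cross terms `zᵢcⱼ + zⱼcᵢ`. -/
theorem cross_terms_det_eq_zero {R : Type*} [CommRing R] (z₀ z₁ z₂ c₀ c₁ c₂ : R) :
    4 * (z₀ * c₀) * (z₁ * c₁) * (z₂ * c₂)
      + (z₁ * c₂ + z₂ * c₁) * (z₀ * c₂ + z₂ * c₀) * (z₀ * c₁ + z₁ * c₀)
      - (z₀ * c₀) * (z₁ * c₂ + z₂ * c₁) ^ 2 - (z₁ * c₁) * (z₀ * c₂ + z₂ * c₀) ^ 2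
      - (z₂ * c₂) * (z₀ * c₁ + z₁ * c₀) ^ 2 = 0 := by
  ring

section CrossTermSystem

variable {K : Type*} [Field K] {a b P₀ P₁ P₂ X Y Z : K}

theorem mul_cross_term_eq (hab : a ^ 3 + 1 = 2 * a * b) (hb : 2 * b ≠ 0)
    (k₀ : Y + a * Z + 2 * b * P₀ = 0) (k₁ : Z + a * X + 2 * b * P₁ = 0)
    (k₂ : X + a * Y + 2 * b * P₂ = 0) :
    a * X = a * P₀ - a ^ 2 * P₁ - P₂ := by
  apply mul_left_cancel₀ hb
  linear_combination k₂ - a * k₀ + a ^ 2 * k₁ - X * hab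

theorem prod_eq_zero_of_cross_term_system (hab : a ^ 3 + 1 = 2 * a * b) (ha : a ^ 3 ≠ 1)
    (hb : 2 * b ≠ 0) (k₀ : Y + a * Z + 2 * b * P₀ = 0) (k₁ : Z + a * X + 2 * b * P₁ = 0)
    (k₂ : X + a * Y + 2 * b * P₂ = 0)
    (hdet : 4 * P₀ * P₁ * P₂ + X * Y * Z - P₀ * X ^ 2 - P₁ * Y ^ 2 - P₂ * Z ^ 2 = 0) :
    P₀ * P₁ * P₂ = 0 := by
  have hX := mul_cross_term_eq hab hb k₀ k₁ k₂
  have hY := mul_cross_term_eq hab hb k₁ k₂ k₀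
  have hZ := mul_cross_term_eq hab hb k₂ k₀ k₁
  have hdet_scaled : a ^ 3 * 0 = 4 * a ^ 3 * (P₀ * P₁ * P₂) + (a * X) * (a * Y) * (a * Z)
      - a * P₀ * (a * X) ^ 2 - a * P₁ * (a * Y) ^ 2 - a * P₂ * (a * Z) ^ 2 := by
    rw [← hdet]; ring
  rw [hX, hY, hZ] at hdet_scaled
  have hP : (a ^ 3 - 1) ^ 2 * (P₀ * P₁ * P₂) = 0 := by linear_combination hdet_scaled
  exact (mul_eq_zero.mp hP).resolve_left (pow_ne_zero 2 (sub_ne_zero.mpr ha))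

end CrossTermSystem

theorem twisted_polarization_ne_zero {K : Type*} [Field K] (σ : K →+* K)
    (hσ : ∀ x, σ (σ (σ x)) = x) {a b : K} (ha : σ a = a) (hb : σ b = b)
    (hab : a ^ 3 + 1 = 2 * a * b) (ha₁ : a ^ 3 ≠ 1) (hb₀ : 2 * b ≠ 0) {z c : K} (hz : z ≠ 0) (hc : c ≠ 0) :
    σ (σ z) * c + z * σ (σ c) + a * (σ z * c + z * σ c) + 2 * b * (z * c) ≠ 0 := by
  intro k₀
  have k₁ := congrArg σ k₀
  simp only [map_add, map_mul, map_ofNat, map_zero, hσ, ha, hb] at k₁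
  have k₂ := congrArg σ k₁
  simp only [map_add, map_mul, map_ofNat, map_zero, hσ, ha, hb] at k₂
  have hP := prod_eq_zero_of_cross_term_system hab ha₁ hb₀
    (X := σ z * σ (σ c) + σ (σ z) * σ c) (P₀ := z * c) (P₁ := σ z * σ c)
    (P₂ := σ (σ z) * σ (σ c)) (by linear_combination k₀) (by linear_combination k₁)
    (by linear_combination k₂) (cross_terms_det_eq_zero z (σ z) (σ (σ z)) c (σ c) (σ (σ c)))
  simp [hz, hc] at hP

theorem stmt_7_general (q : ℕ)
    (F E : Type*) [Field F] [Fintype F] [Field E] [Fintype E] [Algebra F E]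
    (hF : Fintype.card F = q) (hE : Fintype.card E = q ^ 3)
    (A B : F) (h : A ^ 3 - 2 * A * B + 1 = 0) (h1 : A ^ 3 ≠ 1) (h2 : A ^ 3 ≠ -1) :
    ∀ C : E, C ≠ 0 → Function.Bijective (fun x : E =>
      (x + C) * ((x + C) ^ (q ^ 2) + algebraMap F E A * (x + C) ^ q
          + algebraMap F E B * (x + C))
        - x * (x ^ (q ^ 2) + algebraMap F E A * x ^ q + algebraMap F E B * x)) := by
  subst hF
  set σ := FiniteField.frobeniusAlgHom F E
  have hσ : ∀ x : E, x ^ Fintype.card F = σ x := fun _ => rfl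
  have hσ₂ : ∀ x : E, x ^ Fintype.card F ^ 2 = σ (σ x) := fun x => by
    rw [sq, pow_mul]; rfl
  have hσ₃ : ∀ x : E, σ (σ (σ x)) = x := fun x => by
    calc σ (σ (σ x)) = x ^ Fintype.card E := by
          rw [hE, ← hσ, ← hσ, ← hσ, ← pow_mul, ← pow_mul]; ring_nf
      _ = x := FiniteField.pow_card x
  have hB : 2 * B ≠ 0 := fun hB => h2 (by linear_combination h + A * hB)
  intro C hC
  rw [← Finite.injective_iff_bijective]
  intro x y hxy
  by_contra hne
  refine twisted_polarization_ne_zero (σ : E →+* E) hσ₃ (σ.commutes A) (σ.commutes B) ?_ ?_ ?_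
    (sub_ne_zero.mpr hne) hC ?_
  · simpa only [map_add, map_mul, map_pow, map_one, map_ofNat] using
      congrArg (algebraMap F E) (by linear_combination h : A ^ 3 + 1 = 2 * A * B)
  · simpa only [map_pow, map_one] using (algebraMap F E).injective.ne h1
  · simpa only [map_mul, map_ofNat] using (map_ne_zero (algebraMap F E)).mpr hB
  · simp only [hσ, hσ₂, map_add] at hxy
    simp only [AlgHom.coe_toRingHom, map_sub]
    linear_combination hxy

/-- If `A³ - 2AB + 1 = 0`, `A³ ≠ 1` and `A³ ≠ -1`, then
`f_{A,B}(x) = x (x^{q²} + A x^q + B x)` is planar on `F_{q³}`. -/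
theorem stmt_7 (q : ℕ) (hp : IsPrimePow q) (hq : Odd q)
    (F E : Type*) [Field F] [Fintype F] [Field E] [Fintype E] [Algebra F E]
    (hF : Fintype.card F = q) (hE : Fintype.card E = q ^ 3)
    (A B : F) (h : A ^ 3 - 2 * A * B + 1 = 0) (h1 : A ^ 3 ≠ 1) (h2 : A ^ 3 ≠ -1) :
    ∀ C : E, C ≠ 0 → Function.Bijective (fun x : E =>
      (x + C) * ((x + C) ^ (q ^ 2) + algebraMap F E A * (x + C) ^ q
          + algebraMap F E B * (x + C))
        - x * (x ^ (q ^ 2) + algebraMap F E A * x ^ q + algebraMap F E B * x)) :=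
  stmt_7_general q F E hF hE A B h h1 h2
end

section
/- Let q be an odd prime power and B ∈ F_q with B³ ≠ 1. Then f(x) = x(x^{q²} + B² x^q + B x) is planar on F_{q³}. -/
/-!
Write `f(x) = x L(x)` with the additive map `L z = φ²z + b²φz + bz`, where `φ` is the `q`-Frobenius
of `F_{q³}`. Then `f(x + C) - f(x) = x L(C) + C L(x) + f(C)`, so planarity means that
`x L(y) + y L(x) = 0` has no solution with `x, y ≠ 0`. If it had one, then `L x = r x` and
`L y = -r y` for `r = L(x)/x`. Applying `φ` to `L x = r x` gives a `3 × 3` linear system in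
`x, φx, φ²x` whose determinant must vanish:
`(b³ - 1)² + b (r φr + φr φ²r + φ²r r) - r φr φ²r = 0`.
Comparing with the same identity for `-r` gives `2 N(r) = 0`, so `r = 0` and then `(b³ - 1)² = 0`.
-/

section Linearized

variable {E : Type*} [Field E]

@[simps]
def linearizedMap (φ : E →+* E) (b : E) : E →+ E where
  toFun z := φ (φ z) + b ^ 2 * φ z + b * z
  map_zero' := by simp
  map_add' x y := by simp only [map_add]; ring

theorem map_linearizedMap {φ : E →+* E} {b : E} (hb : φ b = b) (z : E) :
    φ (linearizedMap φ b z) = linearizedMap φ b (φ z) := by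
  simp [hb]

variable {φ : E →+* E} (hφ3 : ∀ z, φ (φ (φ z)) = z) {b : E} (hb : φ b = b)
include hφ3 hb

theorem linearizedMap_eigenvalue_relation {x r : E} (hx : x ≠ 0)
    (h : linearizedMap φ b x = r * x) :
    (b ^ 3 - 1) ^ 2 + b * (r * φ r + φ r * φ (φ r) + φ (φ r) * r) - r * φ r * φ (φ r) = 0 := by
  have h₁ : linearizedMap φ b (φ x) = φ r * φ x := by
    rw [← map_linearizedMap hb, h, map_mul]
  have h₂ : linearizedMap φ b (φ (φ x)) = φ (φ r) * φ (φ x) := by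
    rw [← map_linearizedMap hb, h₁, map_mul]
  simp only [linearizedMap_apply, hφ3] at h h₁ h₂
  set s₁ := b - φ r
  set s₂ := b - φ (φ r)
  refine (mul_eq_zero.mp ?_).resolve_right hx
  -- the cofactors of the first column of the system's matrix
  linear_combination (s₁ * s₂ - b ^ 2) * h + (1 - b ^ 2 * s₂) * h₁ + (b ^ 4 - s₁) * h₂

theorem mul_linearizedMap_add_mul_linearizedMap_ne_zero (h2 : (2 : E) ≠ 0) (hb3 : b ^ 3 ≠ 1)
    {x y : E} (hx : x ≠ 0) (hy : y ≠ 0) :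
    x * linearizedMap φ b y + y * linearizedMap φ b x ≠ 0 := by
  intro H
  set r := linearizedMap φ b x / x
  have hrx : linearizedMap φ b x = r * x := (div_mul_cancel₀ _ hx).symm
  have hry : linearizedMap φ b y = -r * y :=
    mul_left_cancel₀ hx (by linear_combination H - y * hrx)
  have relx := linearizedMap_eigenvalue_relation hφ3 hb hx hrx
  have rely := linearizedMap_eigenvalue_relation hφ3 hb hy hry
  simp only [map_neg] at rely
  have hnorm : r * φ r * φ (φ r) = 0 := by
    have h2norm : (2 : E) * (r * φ r * φ (φ r)) = 0 := by linear_combination rely - relx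
    exact (mul_eq_zero.mp h2norm).resolve_left h2
  have hr : r = 0 := by simpa [map_eq_zero] using hnorm
  rw [hr] at relx
  exact hb3 (sub_eq_zero.mp (pow_eq_zero_iff two_ne_zero |>.mp (by simpa using relx)))

end Linearized

theorem bijective_add_mul_map_add_sub_mul_map {E : Type*} [CommRing E] [Finite E] (L : E →+ E)
    (C : E) (h : ∀ x, x * L C + C * L x = 0 → x = 0) :
    Function.Bijective fun x => (x + C) * L (x + C) - x * L x := by
  refine Finite.injective_iff_bijective.mp fun u v huv => sub_eq_zero.mp (h _ ?_)
  simp only [map_add, map_sub] at huv ⊢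
  linear_combination huv

theorem stmt_8_general (q : ℕ) (hq : Odd q)
    (F E : Type*) [Field F] [Fintype F] [Field E] [Fintype E] [Algebra F E]
    (hF : Fintype.card F = q) (hE : Fintype.card E = q ^ 3)
    (B : F) (hB : B ^ 3 ≠ 1) :
    ∀ C : E, C ≠ 0 → Function.Bijective (fun x : E =>
      (x + C) * ((x + C) ^ (q ^ 2) + algebraMap F E (B ^ 2) * (x + C) ^ q
          + algebraMap F E B * (x + C))
        - x * (x ^ (q ^ 2) + algebraMap F E (B ^ 2) * x ^ q + algebraMap F E B * x)) := by
  intro C hC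
  let φ : E →+* E := FiniteField.frobeniusAlgHom F E
  have hφ (z : E) : φ z = z ^ q := by simp [φ, hF]
  have hφ3 (z : E) : φ (φ (φ z)) = z := by
    rw [hφ, hφ, hφ, ← pow_mul, ← pow_mul, show q * (q * q) = Fintype.card E by rw [hE]; ring,
      FiniteField.pow_card]
  have hb : φ (algebraMap F E B) = algebraMap F E B := (FiniteField.frobeniusAlgHom F E).commutes B
  have h2 : (2 : E) ≠ 0 := by
    refine Ring.two_ne_zero fun h => ?_
    rw [← Algebra.ringChar_eq F E, FiniteField.even_card_iff_char_two, hF] at h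
    exact Nat.not_even_iff_odd.mpr hq (Nat.even_iff.mpr h)
  have hb3 : algebraMap F E B ^ 3 ≠ 1 := by
    rwa [← map_pow, ← map_one (algebraMap F E), (algebraMap F E).injective.ne_iff]
  convert bijective_add_mul_map_add_sub_mul_map (linearizedMap φ (algebraMap F E B)) C
    fun x hx => by_contra fun hx0 =>
      mul_linearizedMap_add_mul_linearizedMap_ne_zero hφ3 hb h2 hb3 hx0 hC hx
    using 3 with x <;>
    simp only [linearizedMap_apply, hφ, ← pow_mul, sq, map_mul]

/-- If `B ∈ F_q` with `B³ ≠ 1` then `f(x) = x (x^{q²} + B² x^q + B x)` is planar on `F_{q³}`. -/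
theorem stmt_8 (q : ℕ) (hp : IsPrimePow q) (hq : Odd q)
    (F E : Type*) [Field F] [Fintype F] [Field E] [Fintype E] [Algebra F E]
    (hF : Fintype.card F = q) (hE : Fintype.card E = q ^ 3)
    (B : F) (hB : B ^ 3 ≠ 1) :
    ∀ C : E, C ≠ 0 → Function.Bijective (fun x : E =>
      (x + C) * ((x + C) ^ (q ^ 2) + algebraMap F E (B ^ 2) * (x + C) ^ q
          + algebraMap F E B * (x + C))
        - x * (x ^ (q ^ 2) + algebraMap F E (B ^ 2) * x ^ q + algebraMap F E B * x)) :=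
  stmt_8_general q hq F E hF hE B hB
end

section
/- Let q be an odd prime power and B ∈ F_q with B³ = 1. Then f(x) = x(x^{q²} + B² x^q + B x) is not planar on F_{q³}. -/
/-!
With `q = #F` and `a = B ∈ F`, the map `L x = x^{q²} + a² x^q + a x` is additive on `E`,
and since `x^{q³} = x`, `a^q = a` and `a³ = 1` one computes `(L x)^q = a² · L x`. So the image
of `L` consists of roots of `X^q - a² X`, at most `q < q³` elements; hence `L` has a nonzero
zero `c`.
Then `f(x + c) - f(x) = x L(c) + c L(x) + c L(c) = c L(x)` vanishes at `x = 0` and `x = c`.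
-/

open Polynomial Function

theorem exists_pow_ne_mul_of_lt_card {R : Type*} [CommRing R] [IsDomain R] [Fintype R]
    {n : ℕ} (hn : 1 < n) (hnR : n < Fintype.card R) (a : R) : ∃ y : R, y ^ n ≠ a * y := by
  by_contra! h
  have hdeg : (X ^ n - C a * X : R[X]).natDegree ≤ n :=
    (natDegree_sub_le_of_le (natDegree_X_pow_le n)
      ((natDegree_C_mul_le a X).trans (natDegree_X_le.trans hn.le))).trans (max_self n).le
  have hzero : (X ^ n - C a * X : R[X]) = 0 :=
    eq_zero_of_natDegree_lt_card_of_eval_eq_zero _ injective_id (fun y => by simp [h y])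
      (hdeg.trans_lt hnR)
  simpa [coeff_X, hn.ne] using congrArg (coeff · n) hzero

theorem not_injective_mul_map_add_sub {R : Type*} [CommRing R] (L : R →+ R) {c : R}
    (hc : c ≠ 0) (hLc : L c = 0) : ¬ Injective fun x => (x + c) * L (x + c) - x * L x :=
  fun h => hc <| h <| by simp [hLc]

namespace FiniteField

variable (K : Type*) {E : Type*} [Field K] [Fintype K] [Field E] [Algebra K E]

local notation "q" => Fintype.card K

theorem add_pow_card_pow (n : ℕ) (x y : E) : (x + y) ^ q ^ n = x ^ q ^ n + y ^ q ^ n := by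
  induction n with
  | zero => simp
  | succ n ih =>
    simp only [pow_succ, pow_mul, ih]
    exact map_add (frobeniusAlgHom K E) _ _

def frobeniusTrinomial (b : K) : E →+ E where
  toFun x := x ^ q ^ 2 + algebraMap K E (b ^ 2) * x ^ q + algebraMap K E b * x
  map_zero' := by simp [Fintype.card_pos.ne']
  map_add' x y := by
    have h := add_pow_card_pow K 1 x y
    rw [pow_one] at h
    rw [add_pow_card_pow, h]
    ring

theorem frobeniusTrinomial_pow_card [Fintype E] (hE : Fintype.card E = q ^ 3) {b : K}
    (hb : b ^ 3 = 1) (x : E) :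
    frobeniusTrinomial K b x ^ q = algebraMap K E (b ^ 2) * frobeniusTrinomial K b x := by
  have hx : x ^ q ^ 3 = x := by rw [← hE, pow_card]
  have hb' : algebraMap K E b ^ 3 = 1 := by rw [← map_pow, hb, map_one]
  change frobeniusAlgHom K E (x ^ q ^ 2 + algebraMap K E (b ^ 2) * x ^ q + algebraMap K E b * x) =
    algebraMap K E (b ^ 2) * (x ^ q ^ 2 + algebraMap K E (b ^ 2) * x ^ q + algebraMap K E b * x)
  simp only [map_add, map_mul, AlgHom.commutes, coe_frobeniusAlgHom, map_pow]
  linear_combination hx + (-x - algebraMap K E b * x ^ q) * hb'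

theorem exists_ne_zero_frobeniusTrinomial_eq_zero [Fintype E] (hE : Fintype.card E = q ^ 3)
    {b : K} (hb : b ^ 3 = 1) : ∃ c : E, c ≠ 0 ∧ frobeniusTrinomial K b c = 0 := by
  by_contra! h
  have hinj : Injective (frobeniusTrinomial K b : E → E) :=
    (injective_iff_map_eq_zero _).2 fun c hc => by_contra fun hc0 => h c hc0 hc
  have hq : 1 < q := Fintype.one_lt_card
  obtain ⟨y, hy⟩ := exists_pow_ne_mul_of_lt_card hq (hE ▸ lt_self_pow₀ hq (by norm_num))
    (algebraMap K E (b ^ 2))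
  obtain ⟨x, rfl⟩ := Finite.surjective_of_injective hinj y
  exact hy (frobeniusTrinomial_pow_card K hE hb x)

end FiniteField

theorem stmt_9_general (q : ℕ)
    (F E : Type*) [Field F] [Fintype F] [Field E] [Fintype E] [Algebra F E]
    (hF : Fintype.card F = q) (hE : Fintype.card E = q ^ 3)
    (B : F) (hB : B ^ 3 = 1) :
    ¬ ∀ C : E, C ≠ 0 → Function.Bijective (fun x : E =>
      (x + C) * ((x + C) ^ (q ^ 2) + algebraMap F E (B ^ 2) * (x + C) ^ q
          + algebraMap F E B * (x + C))
        - x * (x ^ (q ^ 2) + algebraMap F E (B ^ 2) * x ^ q + algebraMap F E B * x)) := by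
  subst hF
  obtain ⟨c, hc, hLc⟩ := FiniteField.exists_ne_zero_frobeniusTrinomial_eq_zero F hE hB
  exact fun h => not_injective_mul_map_add_sub _ hc hLc (h c hc).1

/-- If `B ∈ F_q` with `B³ = 1` then `f(x) = x (x^{q²} + B² x^q + B x)` is not planar on `F_{q³}`. -/
theorem stmt_9 (q : ℕ) (hp : IsPrimePow q) (hq : Odd q)
    (F E : Type*) [Field F] [Fintype F] [Field E] [Fintype E] [Algebra F E]
    (hF : Fintype.card F = q) (hE : Fintype.card E = q ^ 3)
    (B : F) (hB : B ^ 3 = 1) :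
    ¬ ∀ C : E, C ≠ 0 → Function.Bijective (fun x : E =>
      (x + C) * ((x + C) ^ (q ^ 2) + algebraMap F E (B ^ 2) * (x + C) ^ q
          + algebraMap F E B * (x + C))
        - x * (x ^ (q ^ 2) + algebraMap F E (B ^ 2) * x ^ q + algebraMap F E B * x)) :=
  stmt_9_general q F E hF hE B hB
end

section
/- Let q be an odd prime power and A, B ∈ F_q with A³ - 2AB + 1 = 0 and A³ = 1 (or A³ = -1). Then f_{A,B}(x) = x(x^{q²} + A x^q + B x) is not planar on F_{q³}. -/
/-!
Write `σ` for the Frobenius `x ↦ x ^ q` of `E` over `F` and `L = σ² + Aσ + B` for the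
`F`-linear part of `f`. Since `σ³ = 1` on `E`, the skew product `(σ² + Aσ + B)(σ² - Aσ + A² - B)`
equals `(A³ - 2AB + 1) σ + B (A² - B)`, and the hypotheses force both coefficients to vanish.
The second factor is a nonzero polynomial of degree `q² < q³`, so it has a value `C ≠ 0`, and
then `L C = 0`. For such `C` the difference `f (x + C) - f x = C · L x` vanishes at `x = 0` and
at `x = C`.
-/

open Polynomial

section Linearized

variable {R S : Type*} [CommRing R] [CommRing S] [Algebra R S] (σ : S →ₐ[R] S)

def linearizedQuadratic (a b : R) (x : S) : S :=
  σ (σ x) + algebraMap R S a * σ x + algebraMap R S b * x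

theorem linearizedQuadratic_add (a b : R) (x y : S) :
    linearizedQuadratic σ a b (x + y) =
      linearizedQuadratic σ a b x + linearizedQuadratic σ a b y := by
  simp only [linearizedQuadratic, map_add]
  ring

theorem linearizedQuadratic_comp (hσ : ∀ x, σ (σ (σ x)) = x) (a b : R) (x : S) :
    linearizedQuadratic σ a b (linearizedQuadratic σ (-a) (a ^ 2 - b) x) =
      algebraMap R S (a ^ 3 - 2 * a * b + 1) * σ x + algebraMap R S (b * (a ^ 2 - b)) * x := by
  simp only [linearizedQuadratic, map_add, map_mul, AlgHom.commutes, hσ, map_sub, map_pow,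
    map_neg, map_one, map_ofNat]
  ring

end Linearized

theorem not_injective_difference_of_apply_eq_zero {S : Type*} [CommRing S] (L : S → S)
    (hL : ∀ x y, L (x + y) = L x + L y) {C : S} (hC : C ≠ 0) (hLC : L C = 0) :
    ¬ Function.Injective fun x => (x + C) * L (x + C) - x * L x := by
  intro hinj
  refine hC (hinj (a₁ := C) (a₂ := 0) ?_)
  simp [hL, hLC]

section FiniteField

variable {F : Type*} [Field F] [Fintype F]

theorem linearizedQuadratic_frobeniusAlgHom_apply {R : Type*} [CommRing R] [Algebra F R]
    (a b : F) (x : R) :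
    linearizedQuadratic (FiniteField.frobeniusAlgHom F R) a b x =
      x ^ Fintype.card F ^ 2 + algebraMap F R a * x ^ Fintype.card F + algebraMap F R b * x := by
  simp only [linearizedQuadratic, FiniteField.coe_frobeniusAlgHom, ← pow_mul, ← sq]

variable {E : Type*} [Field E] [Fintype E] [Algebra F E]

theorem frobeniusAlgHom_cube_apply (hE : Fintype.card E = Fintype.card F ^ 3) (x : E) :
    FiniteField.frobeniusAlgHom F E (FiniteField.frobeniusAlgHom F E
      (FiniteField.frobeniusAlgHom F E x)) = x := by
  simp only [FiniteField.coe_frobeniusAlgHom, ← pow_mul]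
  rw [← pow_three', ← hE, FiniteField.pow_card]

theorem exists_linearizedQuadratic_frobeniusAlgHom_ne_zero
    (hE : Fintype.card F ^ 2 < Fintype.card E) (c d : F) :
    ∃ x : E, linearizedQuadratic (FiniteField.frobeniusAlgHom F E) c d x ≠ 0 := by
  set q := Fintype.card F
  have hq : 1 < q := Fintype.one_lt_card
  have hqq : q < q ^ 2 := by nlinarith
  have hdeg :
      (X ^ q ^ 2 + C (algebraMap F E c) * X ^ q + C (algebraMap F E d) * X : E[X]).natDegree
        = q ^ 2 := by
    compute_degree!
    all_goals first | omega | simp [hqq.ne', hq.ne']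
  obtain ⟨x, hx⟩ := exists_eval_ne_zero_of_natDegree_lt_card _
    (ne_zero_of_natDegree_gt (n := 0) (by rw [hdeg]; positivity))
    (by rw [hdeg, Cardinal.mk_fintype]; exact_mod_cast hE)
  refine ⟨x, ?_⟩
  simpa only [linearizedQuadratic_frobeniusAlgHom_apply, eval_add, eval_mul, eval_pow, eval_C,
    eval_X] using hx

end FiniteField

theorem mul_sq_sub_eq_zero_of_cube_eq_one_or_neg_one {K : Type*} [Field K] (h2 : (2 : K) ≠ 0)
    {a b : K} (h : a ^ 3 - 2 * a * b + 1 = 0) (h1 : a ^ 3 = 1 ∨ a ^ 3 = -1) :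
    b * (a ^ 2 - b) = 0 := by
  rcases h1 with h1 | h1
  · have hab : a * b = 1 := by
      have : 2 * (a * b - 1) = 0 := by linear_combination -h + h1
      exact sub_eq_zero.mp ((mul_eq_zero.mp this).resolve_left h2)
    linear_combination b ^ 2 * h1 - a ^ 2 * b * hab
  · have ha : a ≠ 0 := by rintro rfl; norm_num at h1
    have hab : a * b = 0 := by
      have : 2 * (a * b) = 0 := by linear_combination -h + h1
      exact (mul_eq_zero.mp this).resolve_left h2
    simp [(mul_eq_zero.mp hab).resolve_left ha]

theorem stmt_10_general (q : ℕ) (hq : Odd q)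
    (F E : Type*) [Field F] [Fintype F] [Field E] [Fintype E] [Algebra F E]
    (hF : Fintype.card F = q) (hE : Fintype.card E = q ^ 3)
    (A B : F) (h : A ^ 3 - 2 * A * B + 1 = 0) (h1 : A ^ 3 = 1 ∨ A ^ 3 = -1) :
    ¬ ∀ C : E, C ≠ 0 → Function.Bijective (fun x : E =>
        (x + C) * ((x + C) ^ (q ^ 2) + algebraMap F E A * (x + C) ^ q
            + algebraMap F E B * (x + C))
          - x * (x ^ (q ^ 2) + algebraMap F E A * x ^ q + algebraMap F E B * x)) := by
  subst hF
  set σ := FiniteField.frobeniusAlgHom F E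
  have h2 : (2 : F) ≠ 0 := Ring.two_ne_zero fun hchar => by
    have := FiniteField.even_card_of_char_two hchar
    rw [Nat.odd_iff] at hq
    omega
  obtain ⟨x, hx⟩ := exists_linearizedQuadratic_frobeniusAlgHom_ne_zero (E := E)
    (by rw [hE]; exact Nat.pow_lt_pow_right Fintype.one_lt_card (by norm_num)) (-A) (A ^ 2 - B)
  have hLC : linearizedQuadratic σ A B (linearizedQuadratic σ (-A) (A ^ 2 - B) x) = 0 := by
    rw [linearizedQuadratic_comp σ (frobeniusAlgHom_cube_apply hE), h,
      mul_sq_sub_eq_zero_of_cube_eq_one_or_neg_one h2 h h1, map_zero, zero_mul, zero_mul, add_zero]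
  generalize linearizedQuadratic σ (-A) (A ^ 2 - B) x = C at hx hLC
  have hnoninj :=
    not_injective_difference_of_apply_eq_zero _ (linearizedQuadratic_add σ A B) hx hLC
  simp only [σ, linearizedQuadratic_frobeniusAlgHom_apply] at hnoninj
  exact fun hplanar => hnoninj (hplanar C hx).injective

/-- If `A³ - 2AB + 1 = 0` and `A³ = 1` or `A³ = -1`, then
`f_{A,B}(x) = x (x^{q²} + A x^q + B x)` is not planar on `F_{q³}`. -/
theorem stmt_10 (q : ℕ) (hp : IsPrimePow q) (hq : Odd q)
    (F E : Type*) [Field F] [Fintype F] [Field E] [Fintype E] [Algebra F E]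
    (hF : Fintype.card F = q) (hE : Fintype.card E = q ^ 3)
    (A B : F) (h : A ^ 3 - 2 * A * B + 1 = 0) (h1 : A ^ 3 = 1 ∨ A ^ 3 = -1) :
    ¬ ∀ C : E, C ≠ 0 → Function.Bijective (fun x : E =>
        (x + C) * ((x + C) ^ (q ^ 2) + algebraMap F E A * (x + C) ^ q
            + algebraMap F E B * (x + C))
          - x * (x ^ (q ^ 2) + algebraMap F E A * x ^ q + algebraMap F E B * x)) :=
  stmt_10_general q hq F E hF hE A B h h1
end

section
/- Let q be an odd prime power, A, B ∈ F_q, and let F_{A,B}(X,Y) = 2AB(X³+Y³+1) + (2A²B+4B²)(X+Y²+X²Y) + (4AB²+2B)(X²+Y+XY²) + (2A³+8B³+2)XY. If A - 2B + 1 = 0, or (A,B) = (1,1), or (A,B) = (1,-1/2), then (X + Y + 1) divides F_{A,B}(X,Y) in F_q[X,Y]. -/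
open MvPolynomial

/-! Under each of the three conditions, the coefficients of `F_{A,B}` at `X + Y² + X²Y` and at
`X² + Y + XY²` coincide, and the coefficient of `XY` is three times their difference with the
coefficient `a` of `X³ + Y³ + 1`.
Such a form is `a (X³ + Y³ + 1 - 3XY) + c (X + Y + 1)(XY + X + Y)`, and `X + Y + 1` divides
`X³ + Y³ + 1 - 3XY`. -/

theorem add_add_one_dvd_cubic_form {R : Type*} [CommRing R] (x y a c : R) :
    x + y + 1 ∣ a * (x ^ 3 + y ^ 3 + 1) + c * (x + y ^ 2 + x ^ 2 * y)
      + c * (x ^ 2 + y + x * y ^ 2) + 3 * (c - a) * (x * y) :=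
  ⟨a * (x ^ 2 + y ^ 2 + 1) + (c - a) * (x * y + x + y), by ring⟩

section Coefficients

variable {K : Type*} [Field K] {A B : K}

theorem mixed_coeff_eq (h : A - 2 * B + 1 = 0 ∨ (A = 1 ∧ B = 1) ∨ (A = 1 ∧ B = -(1 / 2))) :
    4 * A * B ^ 2 + 2 * B = 2 * A ^ 2 * B + 4 * B ^ 2 := by
  rcases h with h | ⟨rfl, rfl⟩ | ⟨rfl, rfl⟩
  · linear_combination (-2 * B * (A - 1)) * h
  · ring
  · ring

theorem xy_coeff_eq (h : A - 2 * B + 1 = 0 ∨ (A = 1 ∧ B = 1) ∨ (A = 1 ∧ B = -(1 / 2))) :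
    2 * A ^ 3 + 8 * B ^ 3 + 2 = 3 * ((2 * A ^ 2 * B + 4 * B ^ 2) - 2 * A * B) := by
  rcases h with h | ⟨rfl, rfl⟩ | ⟨rfl, rfl⟩
  · linear_combination (2 * (A ^ 2 - (B + 1) * A - 2 * B ^ 2 + 2 * B + 1)) * h
  · ring
  · -- in characteristic 2, `1 / 2 = 0` and both sides vanish
    by_cases h2 : (2 : K) = 0
    · simp [h2]
    · field_simp
      ring

end Coefficients

theorem stmt_13_general
    (F : Type*) [Field F]
    (A B : F)
    (h : A - 2 * B + 1 = 0 ∨ (A = 1 ∧ B = 1) ∨ (A = 1 ∧ B = -(1 / 2))) :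
    ((X 0 : MvPolynomial (Fin 2) F) + X 1 + 1) ∣
      (C (2 * A * B) * ((X 0 : MvPolynomial (Fin 2) F) ^ 3 + X 1 ^ 3 + 1)
        + C (2 * A ^ 2 * B + 4 * B ^ 2) * (X 0 + X 1 ^ 2 + X 0 ^ 2 * X 1)
        + C (4 * A * B ^ 2 + 2 * B) * (X 0 ^ 2 + X 1 + X 0 * X 1 ^ 2)
        + C (2 * A ^ 3 + 8 * B ^ 3 + 2) * (X 0 * X 1)) := by
  have hC : (C (3 * ((2 * A ^ 2 * B + 4 * B ^ 2) - 2 * A * B)) : MvPolynomial (Fin 2) F)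
      = 3 * (C (2 * A ^ 2 * B + 4 * B ^ 2) - C (2 * A * B)) := by
    rw [C_mul, map_sub, map_ofNat]
  rw [mixed_coeff_eq h, xy_coeff_eq h, hC]
  exact add_add_one_dvd_cubic_form _ _ _ _

/-- If `A - 2B + 1 = 0`, or `(A,B) = (1,1)`, or `(A,B) = (1,-1/2)`, then `X + Y + 1`
divides `F_{A,B}(X,Y)` in `F_q[X,Y]`. -/
theorem stmt_13 (q : ℕ) (hp : IsPrimePow q) (hq : Odd q)
    (F : Type*) [Field F] [Fintype F] (hF : Fintype.card F = q)
    (A B : F)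
    (h : A - 2 * B + 1 = 0 ∨ (A = 1 ∧ B = 1) ∨ (A = 1 ∧ B = -(1 / 2))) :
    ((X 0 : MvPolynomial (Fin 2) F) + X 1 + 1) ∣
      (C (2 * A * B) * ((X 0 : MvPolynomial (Fin 2) F) ^ 3 + X 1 ^ 3 + 1)
        + C (2 * A ^ 2 * B + 4 * B ^ 2) * (X 0 + X 1 ^ 2 + X 0 ^ 2 * X 1)
        + C (4 * A * B ^ 2 + 2 * B) * (X 0 ^ 2 + X 1 + X 0 * X 1 ^ 2)
        + C (2 * A ^ 3 + 8 * B ^ 3 + 2) * (X 0 * X 1)) :=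
  stmt_13_general F A B h
end

section
/- Let q be an odd prime power and B ∈ F_q nonzero with 8B³ + 1 = 0. Then f(x) = x(x^{q²} + B x) is not planar on F_{q³}. -/
/-!
For `C, z ≠ 0` the difference map `x ↦ f (x + C) - f x` takes the same value at `z` and at `0`
exactly when `z C^{q²} + C z^{q²} + 2BzC = 0`, i.e. when `C^{q²-1} + z^{q²-1} = -2B`. The
`(q²-1)`-th powers in `F_{q³}` are the elements of norm `x^{q²+q+1} = 1`, and `w = -2B` is a cube
root of unity in `F_q`, hence has norm one. So it suffices to find `t` with `N(t) = N(1 - t) = 1`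
and take `C^{q²-1} = wt`, `z^{q²-1} = w(1 - t)`. Such a `t` is a root of an irreducible cubic
`X³ - αX² + (α+1)X - 1`: by Vieta on its Frobenius conjugates, `N(t) = -p(0)` and `N(1 - t) = p(1)`.
-/

open Polynomial

theorem IsCyclic.exists_pow_eq_of_pow_eq_one_s18 {G : Type*} [CommGroup G] [IsCyclic G] [Finite G]
    {k : ℕ} (hk : k ∣ Nat.card G) {u : G} (hu : u ^ k = 1) :
    ∃ y : G, y ^ (Nat.card G / k) = u := by
  have hrange : (powMonoidHom (Nat.card G / k) : G →* G).range ≤ (powMonoidHom k).ker := by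
    rintro _ ⟨y, rfl⟩
    simp [← pow_mul, Nat.div_mul_cancel hk]
  have hn : 0 < Nat.card G := Nat.card_pos
  have hrange_eq := Subgroup.eq_of_le_of_card_ge hrange <| by
    rw [card_powMonoidHom_range, card_powMonoidHom_ker, Nat.gcd_eq_right (Nat.div_dvd_of_dvd hk),
      Nat.div_div_self hk hn.ne', Nat.gcd_eq_right hk]
  obtain ⟨y, rfl⟩ := hrange_eq.ge hu
  exact ⟨y, rfl⟩

theorem FiniteField.exists_ne_zero_pow_sq_eq_mul {E : Type*} [Field E] [Fintype E] {q : ℕ}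
    (hE : Fintype.card E = q ^ 3) {u : E}
    (hu : u ^ (q ^ 2 + q + 1) = 1) : ∃ C : E, C ≠ 0 ∧ C ^ q ^ 2 = u * C := by
  have hq : 0 < q := Nat.pos_of_ne_zero fun h => by simp [h] at hE
  have hu0 : u ≠ 0 := by rintro rfl; simp at hu
  have hcard : Nat.card Eˣ = (q ^ 2 + q + 1) * (q - 1) := by
    rw [Nat.card_units, Nat.card_eq_fintype_card, hE]
    obtain ⟨m, hm⟩ : ∃ m, q = m + 1 := ⟨q - 1, by omega⟩
    rw [hm, Nat.add_sub_cancel, Nat.sub_eq_iff_eq_add (Nat.one_le_pow 3 (m + 1) (by omega))]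
    ring
  obtain ⟨y, hy⟩ := IsCyclic.exists_pow_eq_of_pow_eq_one_s18 (hcard ▸ dvd_mul_right _ _)
    (show (Units.mk0 u hu0) ^ (q ^ 2 + q + 1) = 1 from Units.ext (by simpa using hu))
  rw [hcard, Nat.mul_div_cancel_left _ (by positivity)] at hy
  -- `u = y^(q-1)`, and then `C = y^(-q)` works because `y^(q³) = y`.
  have hyu : (y : E) ^ (q - 1) = u := by simpa using congrArg Units.val hy
  have hyq : (y : E) ^ q = u * y := by rw [← hyu, ← pow_succ, Nat.sub_add_cancel hq]
  refine ⟨((y : E) ^ q)⁻¹, by simp, ?_⟩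
  rw [inv_pow, ← pow_mul, show q * q ^ 2 = Fintype.card E by rw [hE]; ring, FiniteField.pow_card,
    hyq, mul_inv, mul_inv_cancel_left₀ hu0]

theorem FiniteField.mem_range_algebraMap_of_pow_card_eq_self {K L : Type*} [Field K] [Fintype K]
    [CommRing L] [IsDomain L] [Algebra K L] {x : L} (hx : x ^ Fintype.card K = x) :
    x ∈ (algebraMap K L).range := by
  have hsplits : Splits (X ^ Fintype.card K - X : K[X]) := by
    rw [splits_iff_card_roots, roots_X_pow_card_sub_X, X_pow_card_sub_X_natDegree_eq K
      Fintype.one_lt_card, Finset.card_val, Finset.card_univ]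
  exact hsplits.mem_range_of_isRoot (X_pow_card_sub_X_ne_zero K Fintype.one_lt_card)
    (by simp [hx])

theorem FiniteField.exists_aeval_eq_zero_of_natDegree_dvd {F E : Type*} [Field F] [Field E]
    [Algebra F E] [Finite E] {p : F[X]} (hp : Irreducible p)
    (hdvd : p.natDegree ∣ Module.finrank F E) : ∃ t : E, aeval t p = 0 := by
  have := Fact.mk hp
  have hrank : Module.finrank F (AdjoinRoot p) = p.natDegree :=
    (AdjoinRoot.powerBasis hp.ne_zero).finrank.trans (AdjoinRoot.powerBasis_dim _)
  obtain ⟨g⟩ := FiniteField.nonempty_algHom_of_finrank_dvd (K := AdjoinRoot p) (L := E)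
    (hrank ▸ hdvd)
  exact ⟨g (AdjoinRoot.root p), by rw [aeval_algHom_apply, AdjoinRoot.aeval_eq,
    AdjoinRoot.mk_self, map_zero]⟩

theorem cubic_eq_mul_of_roots {K : Type*} [CommRing K] [IsDomain K] {P Q R a b c : K}
    (hab : a ≠ b) (hac : a ≠ c) (hbc : b ≠ c) (ha : a ^ 3 + P * a ^ 2 + Q * a + R = 0)
    (hb : b ^ 3 + P * b ^ 2 + Q * b + R = 0) (hc : c ^ 3 + P * c ^ 2 + Q * c + R = 0) (x : K) :
    x ^ 3 + P * x ^ 2 + Q * x + R = (x - a) * (x - b) * (x - c) := by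
  have hab' : a ^ 2 + a * b + b ^ 2 + P * (a + b) + Q = 0 :=
    mul_left_cancel₀ (sub_ne_zero.mpr hab) (by linear_combination ha - hb)
  have hac' : a ^ 2 + a * c + c ^ 2 + P * (a + c) + Q = 0 :=
    mul_left_cancel₀ (sub_ne_zero.mpr hac) (by linear_combination ha - hc)
  have hP : P = -(a + b + c) :=
    mul_left_cancel₀ (sub_ne_zero.mpr hbc) (by linear_combination hab' - hac')
  have hQ : Q = a * b + a * c + b * c := by linear_combination hab' - (a + b) * hP
  have hR : R = -(a * b * c) := by linear_combination ha - a ^ 2 * hP - a * hQ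
  rw [hP, hQ, hR]
  ring

noncomputable def normOneCubic {F : Type*} [Field F] (α : F) : F[X] :=
  X ^ 3 - C α * X ^ 2 + C (α + 1) * X - 1

theorem exists_forall_not_isRoot_normOneCubic (F : Type*) [Field F] [Finite F] :
    ∃ α : F, ∀ r : F, ¬ (normOneCubic α).IsRoot r := by
  -- Off `r ∈ {0, 1}`, `r` is a root iff `α = g r`. Division by zero gives `g 0 = g 1 = 0`, so `g`
  -- is not injective, hence not surjective.
  set g : F → F := fun r => (1 - r - r ^ 3) / (r - r ^ 2)
  have hg : ¬ g.Surjective := fun hs =>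
    zero_ne_one (Finite.injective_iff_surjective.mpr hs (show g 0 = g 1 by simp [g]))
  obtain ⟨α, hα⟩ : ∃ α, ∀ r, g r ≠ α := by simpa [Function.Surjective] using hg
  refine ⟨α, fun r hr => hα r ?_⟩
  simp only [normOneCubic, IsRoot, eval_sub, eval_add, eval_mul, eval_pow, eval_C, eval_X,
    eval_one] at hr
  have hr0 : r ≠ 0 := by rintro rfl; exact one_ne_zero (by linear_combination -hr)
  have hr1 : r ≠ 1 := by rintro rfl; exact one_ne_zero (by linear_combination hr)
  have hden : r - r ^ 2 ≠ 0 := by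
    rw [show r - r ^ 2 = r * (1 - r) by ring]
    exact mul_ne_zero hr0 (sub_ne_zero.mpr hr1.symm)
  rw [div_eq_iff hden]
  linear_combination -hr

theorem natDegree_normOneCubic {F : Type*} [Field F] (α : F) :
    (normOneCubic α).natDegree = 3 := by
  unfold normOneCubic
  compute_degree!

theorem aeval_normOneCubic {F E : Type*} [Field F] [Field E] [Algebra F E] (α : F) (x : E) :
    aeval x (normOneCubic α) =
      x ^ 3 - algebraMap F E α * x ^ 2 + (algebraMap F E α + 1) * x - 1 := by
  simp [normOneCubic]

section Frobenius

variable {F E : Type*} [Field F] [Fintype F] [Field E] [Algebra F E]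

local notation "q" => Fintype.card F
local notation "φ" => FiniteField.frobeniusAlgHom F E

theorem pow_card_sq_add_card_add_one (x : E) : x ^ (q ^ 2 + q + 1) = φ (φ x) * φ x * x := by
  simp only [FiniteField.coe_frobeniusAlgHom]
  ring

theorem add_pow_card_sq (x y : E) : (x + y) ^ q ^ 2 = x ^ q ^ 2 + y ^ q ^ 2 := by
  have hφ (x y : E) : (x + y) ^ q = x ^ q + y ^ q := map_add φ x y
  rw [sq, pow_mul, pow_mul, pow_mul, hφ, hφ]

theorem pow_eq_one_and_one_sub_pow_eq_one_of_aeval_normOneCubic [Fintype E]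
    (hE : Fintype.card E = q ^ 3) {α : F} {t : E} (ht : aeval t (normOneCubic α) = 0)
    (hφt : φ t ≠ t) : t ^ (q ^ 2 + q + 1) = 1 ∧ (1 - t) ^ (q ^ 2 + q + 1) = 1 := by
  have hroot (s : E) (hs : aeval s (normOneCubic α) = 0) : aeval (φ s) (normOneCubic α) = 0 := by
    rw [aeval_algHom_apply, hs, map_zero]
  have hφ3 : φ (φ (φ t)) = t := by
    simp only [FiniteField.coe_frobeniusAlgHom]
    rw [← pow_mul, ← pow_mul, show q * (q * q) = Fintype.card E by rw [hE]; ring,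
      FiniteField.pow_card]
  have hcubic (s : E) (hs : aeval s (normOneCubic α) = 0) :
      s ^ 3 + -algebraMap F E α * s ^ 2 + (algebraMap F E α + 1) * s + -1 = 0 := by
    rw [aeval_normOneCubic] at hs
    linear_combination hs
  have hvieta := cubic_eq_mul_of_roots hφt.symm (fun h => hφt ((congrArg φ h).trans hφ3))
    (fun h => hφt ((φ).injective h).symm) (hcubic _ ht) (hcubic _ (hroot _ ht))
    (hcubic _ (hroot _ (hroot _ ht)))
  constructor
  · rw [pow_card_sq_add_card_add_one]
    linear_combination hvieta 0
  · rw [pow_card_sq_add_card_add_one, map_sub, map_sub, map_one, map_one]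
    linear_combination -hvieta 1

theorem exists_pow_eq_one_and_one_sub_pow_eq_one [Fintype E] (hE : Fintype.card E = q ^ 3) :
    ∃ t : E, t ^ (q ^ 2 + q + 1) = 1 ∧ (1 - t) ^ (q ^ 2 + q + 1) = 1 := by
  obtain ⟨α, hα⟩ := exists_forall_not_isRoot_normOneCubic F
  have hirr : Irreducible (normOneCubic α) := irreducible_of_degree_le_three_of_not_isRoot
    (by simp [natDegree_normOneCubic]) hα
  have hrank : Module.finrank F E = 3 := Nat.pow_right_injective Fintype.one_lt_card <| by
    beta_reduce
    rw [← Module.card_eq_pow_finrank, hE]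
  obtain ⟨t, ht⟩ := FiniteField.exists_aeval_eq_zero_of_natDegree_dvd hirr
    (by rw [natDegree_normOneCubic, hrank])
  refine ⟨t, pow_eq_one_and_one_sub_pow_eq_one_of_aeval_normOneCubic hE ht fun h => ?_⟩
  obtain ⟨r, rfl⟩ := FiniteField.mem_range_algebraMap_of_pow_card_eq_self h
  exact hα r (by simpa [aeval_algebraMap_apply] using ht)

end Frobenius

theorem stmt_18_general (q : ℕ)
    (F E : Type*) [Field F] [Fintype F] [Field E] [Fintype E] [Algebra F E]
    (hF : Fintype.card F = q) (hE : Fintype.card E = q ^ 3)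
    (B : F) (hB : 8 * B ^ 3 + 1 = 0) :
    ¬ ∀ C : E, C ≠ 0 → Function.Bijective (fun x : E =>
        (x + C) * ((x + C) ^ (q ^ 2) + algebraMap F E B * (x + C))
          - x * (x ^ (q ^ 2) + algebraMap F E B * x)) := by
  subst hF
  set w := algebraMap F E (-(2 * B)) with hw_def
  have hwb : w = -(2 * algebraMap F E B) := by rw [hw_def, map_neg, map_mul, map_ofNat]
  have hw : w ^ (Fintype.card F ^ 2 + Fintype.card F + 1) = 1 := by
    rw [pow_card_sq_add_card_add_one, AlgHom.commutes, AlgHom.commutes, ← map_mul, ← map_mul,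
      show -(2 * B) * -(2 * B) * -(2 * B) = 1 by linear_combination -hB, map_one]
  obtain ⟨t, ht, ht'⟩ := exists_pow_eq_one_and_one_sub_pow_eq_one hE
  obtain ⟨C, hC0, hC⟩ :=
    FiniteField.exists_ne_zero_pow_sq_eq_mul hE (u := w * t) (by rw [mul_pow, hw, ht, one_mul])
  obtain ⟨z, hz0, hz⟩ :=
    FiniteField.exists_ne_zero_pow_sq_eq_mul hE (u := w * (1 - t))
      (by rw [mul_pow, hw, ht', one_mul])
  intro hplanar
  refine hz0 ((hplanar C hC0).injective ?_)
  simp only [zero_add, zero_mul, sub_zero, add_pow_card_sq]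
  linear_combination z * hC + C * hz + z * C * hwb

/-- If `B ∈ F_q` is nonzero with `8B³ + 1 = 0` then `f(x) = x (x^{q²} + B x)` is not
planar on `F_{q³}`. -/
theorem stmt_18 (q : ℕ) (hp : IsPrimePow q) (hq : Odd q)
    (F E : Type*) [Field F] [Fintype F] [Field E] [Fintype E] [Algebra F E]
    (hF : Fintype.card F = q) (hE : Fintype.card E = q ^ 3)
    (B : F) (hB0 : B ≠ 0) (hB : 8 * B ^ 3 + 1 = 0) :
    ¬ ∀ C : E, C ≠ 0 → Function.Bijective (fun x : E =>
        (x + C) * ((x + C) ^ (q ^ 2) + algebraMap F E B * (x + C))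
          - x * (x ^ (q ^ 2) + algebraMap F E B * x)) :=
  stmt_18_general q F E hF hE B hB
end
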